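/- Let r, c, ρ, v, f_1,…,f_m, g, W, Z and μ = Z^{-1} e^{-W} ρ^{⊗m} be as in the context. Let a_j = ∫_{ℝ^d} f_j(x) g(x) dx ≥ 0, and let μ_lin be the probability measure on ℝ^m with density proportional to η ↦ exp(b ∑_{j=1}^m η_j a_j) with respect to ρ^{⊗m} (the lattice Gibbs measure obtained by replacing the energy density v(φ) by the linear function −bφ; its normalization constant is finite by the compact support of r). Then for every bounded measurable F : ℝ^m → ℝ that is monotonically increasing with respect to the coordinatewise order, ∫ F dμ ≤ ∫ F dμ_lin; i.e., the interacting lattice ensemble is dominated by the ensemble with linear energy density. -/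

import Mathlib

open MeasureTheory

/-- Convolution of two measures on `ℝ` (law of the sum of independent variables). -/
noncomputable def mconv (μ ν : Measure ℝ) : Measure ℝ :=
  (μ.prod ν).map (fun p => p.1 + p.2)

/-- `n`-fold convolution power of a measure on `ℝ`, with `r^{*0} = δ₀`. -/
noncomputable def convPow (r : Measure ℝ) : ℕ → Measure ℝ
  | 0 => Measure.dirac 0
  | n + 1 => mconv (convPow r n) r

/-- The compound Poisson measure `ρ_{c,r} = e^{-c} ∑_{n} (c^n / n!) r^{*n}`. -/
noncomputable def cPoisson (c : ℝ) (r : Measure ℝ) : Measure ℝ :=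
  Measure.sum (fun n : ℕ =>
    ENNReal.ofReal (Real.exp (-c) * c ^ n / n.factorial) • convPow r n)

/-!
Under the linear-energy measure `μ_lin`, which is the product of the one-site tilts
`ρ(dt) e^{b a_j t} / Z_j`, bounded increasing observables are positively correlated (Harris'
inequality: Chebyshev's integral inequality on each factor, then Fubini). Since `|v'| ≤ b`, the
map `t ↦ v t + b t` is increasing, so `G η = W η + b ∑ⱼ ηⱼ aⱼ = ∫ (v + b·id)(∑ⱼ ηⱼ fⱼ) g` is
increasing in `η`, and `μ` is the tilt of `μ_lin` by the decreasing weight `e^{-G}`. Harris'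
inequality for `F` and `e^{-G}` (truncated, then dominated convergence) gives
`∫ F dμ = ∫ F e^{-G} dμ_lin / ∫ e^{-G} dμ_lin ≤ ∫ F dμ_lin`.
-/

open Real

namespace MeasureTheory.Measure

section Association

variable {α β : Type*} [MeasurableSpace α] [MeasurableSpace β]

/-- Association in the sense of Esary, Proschan and Walkup. -/
def IsAssociated [Preorder α] (μ : Measure α) : Prop :=
  ∀ ⦃F G : α → ℝ⦄, Measurable F → Measurable G → (∃ M, ∀ x, |F x| ≤ M) →
    (∃ M, ∀ x, |G x| ≤ M) → Monotone F → Monotone G →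
    (∫ x, F x ∂μ) * ∫ x, G x ∂μ ≤ ∫ x, F x * G x ∂μ

lemma isAssociated_of_unique [Preorder α] [Unique α] (μ : Measure α) [IsProbabilityMeasure μ] :
    μ.IsAssociated := by
  intro F G _ _ _ _ _ _
  simp [integral_unique]

/-- Chebyshev's integral inequality. -/
lemma isAssociated_of_linearOrder [LinearOrder α] (μ : Measure α) [IsProbabilityMeasure μ] :
    μ.IsAssociated := by
  rintro F G hFm hGm ⟨M, hM⟩ ⟨N, hN⟩ hF hG
  have hFi : Integrable F μ := .of_bound hFm.aestronglyMeasurable M (ae_of_all _ hM)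
  have hGi : Integrable G μ := .of_bound hGm.aestronglyMeasurable N (ae_of_all _ hN)
  have hFGi : Integrable (fun x => F x * G x) μ :=
    hGi.bdd_mul hFm.aestronglyMeasurable (ae_of_all _ hM)
  have hpos : ∀ p : α × α, 0 ≤ (F p.1 - F p.2) * (G p.1 - G p.2) := fun p => by
    rcases le_total p.1 p.2 with h | h
    · exact mul_nonneg_of_nonpos_of_nonpos (sub_nonpos.2 (hF h)) (sub_nonpos.2 (hG h))
    · exact mul_nonneg (sub_nonneg.2 (hF h)) (sub_nonneg.2 (hG h))
  have hexpand : ∀ p : α × α, (F p.1 - F p.2) * (G p.1 - G p.2)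
      = (F p.1 * G p.1 + F p.2 * G p.2) - (F p.1 * G p.2 + G p.1 * F p.2) := fun p => by ring
  have h : 0 ≤ ∫ p, (F p.1 - F p.2) * (G p.1 - G p.2) ∂μ.prod μ := integral_nonneg hpos
  have hdiag : Integrable (fun p : α × α => F p.1 * G p.1 + F p.2 * G p.2) (μ.prod μ) :=
    (hFGi.comp_fst μ).add (hFGi.comp_snd μ)
  have hcross : Integrable (fun p : α × α => F p.1 * G p.2 + G p.1 * F p.2) (μ.prod μ) :=
    (hFi.mul_prod hGi).add (hGi.mul_prod hFi)
  simp_rw [hexpand] at h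
  rw [integral_sub hdiag hcross, integral_add (hFGi.comp_fst μ) (hFGi.comp_snd μ),
    integral_add (hFi.mul_prod hGi) (hGi.mul_prod hFi),
    integral_fun_fst (fun x => F x * G x), integral_fun_snd (fun x => F x * G x),
    integral_prod_mul, integral_prod_mul] at h
  simp only [probReal_univ, one_smul] at h
  linarith

lemma IsAssociated.map [Preorder α] [Preorder β] {μ : Measure α} (hμ : μ.IsAssociated)
    {e : α → β} (he : Measurable e) (he_mono : Monotone e) : (μ.map e).IsAssociated := by
  intro F G hFm hGm hFb hGb hF hG
  rw [integral_map he.aemeasurable hFm.aestronglyMeasurable,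
    integral_map he.aemeasurable hGm.aestronglyMeasurable,
    integral_map he.aemeasurable (by fun_prop : AEStronglyMeasurable (fun x => F x * G x) _)]
  exact hμ (hFm.comp he) (hGm.comp he) (hFb.imp fun M hM x => hM (e x))
    (hGb.imp fun M hM x => hM (e x)) (hF.comp he_mono) (hG.comp he_mono)

lemma IsAssociated.prod [Preorder α] [Preorder β] {μ : Measure α} {ν : Measure β}
    [IsProbabilityMeasure μ] [IsProbabilityMeasure ν] (hμ : μ.IsAssociated)
    (hν : ν.IsAssociated) : (μ.prod ν).IsAssociated := by
  have slice : ∀ H : α × β → ℝ, Measurable H → ∀ M, (∀ p, |H p| ≤ M) → Monotone H →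
      Measurable (fun x => ∫ y, H (x, y) ∂ν) ∧ (∀ x, |∫ y, H (x, y) ∂ν| ≤ M) ∧
        Monotone (fun x => ∫ y, H (x, y) ∂ν) := by
    intro H hHm M hM hH
    have hint : ∀ x, Integrable (fun y => H (x, y)) ν := fun x =>
      .of_bound (hHm.comp measurable_prodMk_left).aestronglyMeasurable M
        (ae_of_all _ fun y => hM _)
    refine ⟨hHm.stronglyMeasurable.integral_prod_right'.measurable, fun x => ?_,
      fun x x' hx => integral_mono (hint x) (hint x') fun y => hH (Prod.mk_le_mk.2 ⟨hx, le_rfl⟩)⟩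
    simpa using norm_integral_le_of_norm_le_const (f := fun y => H (x, y))
      (ae_of_all ν fun y => hM (x, y))
  rintro F G hFm hGm ⟨M, hM⟩ ⟨N, hN⟩ hF hG
  obtain ⟨hF'm, hF'b, hF'⟩ := slice F hFm M hM hF
  obtain ⟨hG'm, hG'b, hG'⟩ := slice G hGm N hN hG
  have hFGb : ∀ p, |F p * G p| ≤ M * N := fun p => by
    rw [abs_mul]
    exact mul_le_mul (hM p) (hN p) (abs_nonneg _) ((abs_nonneg _).trans (hM p))
  rw [integral_prod _ (.of_bound hFm.aestronglyMeasurable M (ae_of_all _ hM)),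
    integral_prod _ (.of_bound hGm.aestronglyMeasurable N (ae_of_all _ hN)),
    integral_prod (fun p => F p * G p)
      (.of_bound (hFm.mul hGm).aestronglyMeasurable (M * N) (ae_of_all _ hFGb))]
  refine (hμ hF'm hG'm ⟨M, hF'b⟩ ⟨N, hG'b⟩ hF' hG').trans (integral_mono ?_ ?_ fun x => ?_)
  · refine .of_bound (hF'm.mul hG'm).aestronglyMeasurable (M * N) (ae_of_all _ fun x => ?_)
    rw [Real.norm_eq_abs, abs_mul]
    exact mul_le_mul (hF'b x) (hG'b x) (abs_nonneg _) ((abs_nonneg _).trans (hF'b x))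
  · refine .of_bound ((hFm.mul hGm).stronglyMeasurable.integral_prod_right').aestronglyMeasurable
      (M * N) (ae_of_all _ fun x => ?_)
    simpa using norm_integral_le_of_norm_le_const (f := fun y => F (x, y) * G (x, y))
      (ae_of_all ν fun y => hFGb (x, y))
  · exact hν (hFm.comp measurable_prodMk_left) (hGm.comp measurable_prodMk_left)
      ⟨M, fun y => hM _⟩ ⟨N, fun y => hN _⟩ (fun y y' hy => hF (Prod.mk_le_mk.2 ⟨le_rfl, hy⟩))
      (fun y y' hy => hG (Prod.mk_le_mk.2 ⟨le_rfl, hy⟩))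

/-- Harris' inequality. -/
theorem isAssociated_pi [Preorder α] :
    ∀ {n : ℕ} (μs : Fin n → Measure α) [∀ i, IsProbabilityMeasure (μs i)],
      (∀ i, (μs i).IsAssociated) → (Measure.pi μs).IsAssociated
  | 0, μs, _, _ => isAssociated_of_unique _
  | n + 1, μs, _, h => by
    rw [← (measurePreserving_piFinSuccAbove μs 0).symm.map_eq]
    refine ((h 0).prod (isAssociated_pi _ fun j => h _)).map (MeasurableEquiv.measurable _) ?_
    rintro ⟨x, p⟩ ⟨y, q⟩ ⟨hxy, hpq⟩
    simp only [MeasurableEquiv.piFinSuccAbove_symm_apply, Fin.insertNthEquiv_zero]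
    exact Fin.cons_le_cons.2 ⟨hxy, hpq⟩

end Association

section Tilting

variable {α : Type*} [MeasurableSpace α] [Preorder α] {μ : Measure α} {F h : α → ℝ}

lemma IsAssociated.integral_mul_le_of_antitone (hμ : μ.IsAssociated) {K : α → ℝ}
    (hFm : Measurable F) (hKm : Measurable K) (hFb : ∃ M, ∀ x, |F x| ≤ M)
    (hKb : ∃ M, ∀ x, |K x| ≤ M) (hF : Monotone F) (hK : Antitone K) :
    ∫ x, F x * K x ∂μ ≤ (∫ x, F x ∂μ) * ∫ x, K x ∂μ := by
  have := hμ hFm hKm.neg hFb (hKb.imp fun M hM x => (abs_neg (K x)).trans_le (hM x)) hF hK.neg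
  simp only [Pi.neg_apply, mul_neg, integral_neg] at this
  linarith

/-- The weight is truncated to `min (exp ∘ h) N`, and `N → ∞` by dominated convergence. -/
lemma IsAssociated.integral_mul_exp_le [IsProbabilityMeasure μ] (hμ : μ.IsAssociated)
    (hFm : Measurable F) (hFb : ∃ M, ∀ x, |F x| ≤ M) (hF : Monotone F) (hhm : Measurable h)
    (hh : Antitone h) (hint : Integrable (fun x => exp (h x)) μ) :
    ∫ x, F x * exp (h x) ∂μ ≤ (∫ x, F x ∂μ) * ∫ x, exp (h x) ∂μ := by
  obtain ⟨M, hM⟩ := hFb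
  set K : ℕ → α → ℝ := fun N x => min (exp (h x)) N
  have hK0 : ∀ N x, 0 ≤ K N x := fun N x => le_min (exp_pos _).le N.cast_nonneg
  have hKle : ∀ N x, K N x ≤ exp (h x) := fun N x => min_le_left _ _
  have hKm : ∀ N, Measurable (K N) := fun N => hhm.exp.min measurable_const
  have hlim : ∀ x, Filter.Tendsto (fun N => K N x) Filter.atTop (nhds (exp (h x))) := fun x =>
    tendsto_atTop_of_eventually_const (i₀ := ⌈exp (h x)⌉₊) fun N hN =>
      min_eq_left ((Nat.le_ceil _).trans (Nat.cast_le.2 hN))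
  have hFK : Filter.Tendsto (fun N => ∫ x, F x * K N x ∂μ) Filter.atTop
      (nhds (∫ x, F x * exp (h x) ∂μ)) := by
    refine tendsto_integral_of_dominated_convergence (fun x => M * exp (h x))
      (fun N => (hFm.mul (hKm N)).aestronglyMeasurable) (hint.const_mul M)
      (fun N => ae_of_all _ fun x => ?_) (ae_of_all _ fun x => (hlim x).const_mul (F x))
    rw [Real.norm_eq_abs, abs_mul, abs_of_nonneg (hK0 N x)]
    exact mul_le_mul (hM x) (hKle N x) (hK0 N x) ((abs_nonneg _).trans (hM x))
  have hK : Filter.Tendsto (fun N => ∫ x, K N x ∂μ) Filter.atTop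
      (nhds (∫ x, exp (h x) ∂μ)) := by
    refine tendsto_integral_of_dominated_convergence (fun x => exp (h x))
      (fun N => (hKm N).aestronglyMeasurable) hint
      (fun N => ae_of_all _ fun x => ?_) (ae_of_all _ hlim)
    rw [Real.norm_eq_abs, abs_of_nonneg (hK0 N x)]
    exact hKle N x
  refine le_of_tendsto_of_tendsto' hFK (hK.const_mul _) fun N => ?_
  exact hμ.integral_mul_le_of_antitone hFm (hKm N) ⟨M, hM⟩
    ⟨N, fun x => (abs_of_nonneg (hK0 N x)).trans_le (min_le_right _ _)⟩ hF
    fun x y hxy => min_le_min_right _ (exp_le_exp.2 (hh hxy))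

lemma IsAssociated.integral_tilted_le [IsProbabilityMeasure μ] (hμ : μ.IsAssociated)
    (hFm : Measurable F) (hFb : ∃ M, ∀ x, |F x| ≤ M) (hF : Monotone F) (hhm : Measurable h)
    (hh : Antitone h) (hint : Integrable (fun x => exp (h x)) μ) :
    ∫ x, F x ∂μ.tilted h ≤ ∫ x, F x ∂μ := by
  simp_rw [integral_tilted, smul_eq_mul, div_mul_eq_mul_div, integral_div, mul_comm (exp _)]
  rw [div_le_iff₀ (integral_exp_pos hint)]
  exact hμ.integral_mul_exp_le hFm hFb hF hhm hh hint

end Tilting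

lemma tilted_pi_eq_pi_tilted {α ι : Type*} [MeasurableSpace α] [Fintype ι] (μs : ι → Measure α)
    [∀ i, SigmaFinite (μs i)] (f : ι → α → ℝ) :
    (Measure.pi μs).tilted (fun x => ∑ i, f i (x i)) =
      Measure.pi fun i => (μs i).tilted (f i) := by
  set Z : ι → ℝ := fun i => ∫ t, exp (f i t) ∂μs i
  have hZ : ∫ x, exp (∑ i, f i (x i)) ∂Measure.pi μs = ∏ i, Z i := by
    simp_rw [exp_sum]
    exact integral_fintype_prod_eq_prod fun i t => exp (f i t)
  refine (Measure.pi_eq fun s hs => ?_).symm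
  have hbox : (Set.univ.pi s).indicator (fun x => exp (∑ i, f i (x i)) / ∏ i, Z i) =
      fun x => ∏ i, (s i).indicator (fun t => exp (f i t) / Z i) (x i) := by
    ext x
    by_cases hx : x ∈ Set.univ.pi s
    · rw [Set.indicator_of_mem hx, exp_sum, ← Finset.prod_div_distrib]
      exact Finset.prod_congr rfl fun i _ =>
        (Set.indicator_of_mem (hx i (Set.mem_univ i)) (fun t => exp (f i t) / Z i)).symm
    · obtain ⟨i, hi⟩ : ∃ i, x i ∉ s i := by simpa [Set.mem_pi] using hx
      rw [Set.indicator_of_notMem hx,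
        Finset.prod_eq_zero (Finset.mem_univ i) (Set.indicator_of_notMem hi _)]
  rw [tilted_apply_eq_ofReal_integral' _ (MeasurableSet.univ_pi hs), hZ,
    ← integral_indicator (MeasurableSet.univ_pi hs), hbox, integral_fintype_prod_eq_prod,
    ENNReal.ofReal_prod_of_nonneg fun i _ => integral_nonneg fun t =>
      Set.indicator_nonneg (fun t _ => div_nonneg (exp_pos _).le (integral_nonneg
        fun _ => (exp_pos _).le)) t]
  refine Finset.prod_congr rfl fun i _ => ?_
  rw [tilted_apply_eq_ofReal_integral' _ (hs i), integral_indicator (hs i)]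

lemma isAssociated_tilted_pi {α : Type*} [MeasurableSpace α] [LinearOrder α] {n : ℕ}
    (μs : Fin n → Measure α) [∀ i, IsProbabilityMeasure (μs i)] (f : Fin n → α → ℝ)
    (hf : ∀ i, Integrable (fun t => exp (f i t)) (μs i)) :
    ((Measure.pi μs).tilted fun x => ∑ i, f i (x i)).IsAssociated := by
  have := fun i => isProbabilityMeasure_tilted (hf i)
  rw [tilted_pi_eq_pi_tilted]
  exact isAssociated_pi _ fun i => isAssociated_of_linearOrder _

theorem integral_tilted_neg_le_integral_tilted_linear {n : ℕ} (μs : Fin n → Measure ℝ)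
    [∀ i, IsProbabilityMeasure (μs i)] (s : Fin n → ℝ)
    (hs : ∀ i, Integrable (fun t => exp (s i * t)) (μs i)) {W : (Fin n → ℝ) → ℝ}
    (hWm : Measurable W) (hW : Integrable (fun η => exp (-W η)) (Measure.pi μs))
    (hmono : Monotone fun η => W η + ∑ i, s i * η i) {F : (Fin n → ℝ) → ℝ}
    (hFm : Measurable F) (hFb : ∃ M, ∀ η, |F η| ≤ M) (hF : Monotone F) :
    ∫ η, F η ∂(Measure.pi μs).tilted (fun η => -W η) ≤
      ∫ η, F η ∂(Measure.pi μs).tilted (fun η => ∑ i, s i * η i) := by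
  have hL : Integrable (fun η => exp (∑ i, s i * η i)) (Measure.pi μs) := by
    simpa only [exp_sum] using Integrable.fintype_prod hs
  have := isProbabilityMeasure_tilted hL
  have htilt : (Measure.pi μs).tilted (fun η => -W η) =
      ((Measure.pi μs).tilted fun η => ∑ i, s i * η i).tilted
        fun η => -(W η + ∑ i, s i * η i) := by
    rw [tilted_tilted hL]
    congr 1 with η
    simp only [Pi.add_apply]
    ring
  rw [htilt]
  refine (isAssociated_tilted_pi μs (fun i t => s i * t) hs).integral_tilted_le hFm hFb hF
    (hWm.add (by fun_prop)).neg hmono.neg ?_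
  rw [integrable_tilted_iff hL]
  simpa [← exp_add] using hW

end MeasureTheory.Measure

section CompoundPoisson

variable {r : Measure ℝ} {c C : ℝ}

instance isProbabilityMeasure_convPow [IsProbabilityMeasure r] (n : ℕ) :
    IsProbabilityMeasure (convPow r n) := by
  induction n with
  | zero => rw [convPow]; infer_instance
  | succ n _ => rw [convPow, mconv]; exact Measure.isProbabilityMeasure_map (by fun_prop)

lemma isProbabilityMeasure_cPoisson [IsProbabilityMeasure r] (hc : 0 ≤ c) :
    IsProbabilityMeasure (cPoisson c r) := by
  have hsum := ProbabilityTheory.hasSum_one_poissonMeasure c.toNNReal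
  rw [Real.coe_toNNReal c hc] at hsum
  constructor
  simp only [cPoisson, Measure.sum_apply _ MeasurableSet.univ, Measure.smul_apply, measure_univ,
    smul_eq_mul, mul_one]
  rw [← ENNReal.ofReal_tsum_of_nonneg (fun n => by positivity) hsum.summable, hsum.tsum_eq,
    ENNReal.ofReal_one]

lemma ae_abs_le_convPow (hr : ∀ᵐ t ∂r, |t| ≤ C) (n : ℕ) : ∀ᵐ t ∂convPow r n, |t| ≤ n * C := by
  induction n with
  | zero => simp [convPow, ae_dirac_eq]
  | succ n ih =>
    rw [convPow, mconv, ae_map_iff (by fun_prop) (measurableSet_le (by fun_prop) (by fun_prop))]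
    filter_upwards [Measure.quasiMeasurePreserving_fst.ae ih,
      Measure.quasiMeasurePreserving_snd.ae hr] with p h1 h2
    push_cast
    linarith [abs_add_le p.1 p.2]

lemma integrable_exp_mul_abs_cPoisson [IsProbabilityMeasure r] (hc : 0 ≤ c)
    (hr : ∀ᵐ t ∂r, |t| ≤ C) (s : ℝ) : Integrable (fun t => exp (s * |t|)) (cPoisson c r) := by
  refine ⟨by fun_prop, (hasFiniteIntegral_iff_ofReal (ae_of_all _ fun t => (exp_pos _).le)).2 ?_⟩
  have hterm : ∀ n : ℕ, ENNReal.ofReal (exp (-c) * c ^ n / n.factorial) *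
      ∫⁻ t, ENNReal.ofReal (exp (s * |t|)) ∂convPow r n ≤
        ENNReal.ofReal (exp (-c) * (c * exp (|s| * C)) ^ n / n.factorial) := by
    intro n
    have hbound : ∀ᵐ t ∂convPow r n,
        ENNReal.ofReal (exp (s * |t|)) ≤ ENNReal.ofReal (exp (|s| * (n * C))) := by
      filter_upwards [ae_abs_le_convPow hr n] with t ht
      refine ENNReal.ofReal_le_ofReal (exp_le_exp.2 ?_)
      exact (mul_le_mul_of_nonneg_right (le_abs_self s) (abs_nonneg t)).trans
        (mul_le_mul_of_nonneg_left ht (abs_nonneg s))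
    calc _ ≤ ENNReal.ofReal (exp (-c) * c ^ n / n.factorial) *
          ENNReal.ofReal (exp (|s| * (n * C))) :=
          mul_le_mul_right (by simpa using lintegral_mono_ae hbound) _
      _ = _ := by
          rw [← ENNReal.ofReal_mul (by positivity), mul_pow, ← exp_nat_mul]
          ring_nf
  have hsum : Summable fun n : ℕ => exp (-c) * (c * exp (|s| * C)) ^ n / n.factorial := by
    simpa only [mul_div_assoc] using (Real.summable_pow_div_factorial _).mul_left (exp (-c))
  rw [cPoisson, lintegral_sum_measure]
  simp_rw [lintegral_smul_measure]
  refine (ENNReal.tsum_le_tsum hterm).trans_lt ?_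
  rw [← ENNReal.ofReal_tsum_of_nonneg (fun n => by positivity) hsum]
  exact ENNReal.ofReal_lt_top

lemma integrable_exp_mul_cPoisson [IsProbabilityMeasure r] (hc : 0 ≤ c)
    (hr : ∀ᵐ t ∂r, |t| ≤ C) (s : ℝ) : Integrable (fun t => exp (s * t)) (cPoisson c r) :=
  (integrable_exp_mul_abs_cPoisson hc hr |s|).mono' (by fun_prop) (ae_of_all _ fun t => by
    rw [Real.norm_eq_abs, abs_of_pos (exp_pos _), ← abs_mul]
    exact exp_le_exp.2 (le_abs_self _))

lemma integrable_exp_pi_cPoisson {ι : Type*} [Fintype ι] [IsProbabilityMeasure r] (hc : 0 ≤ c)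
    (hr : ∀ᵐ t ∂r, |t| ≤ C) {h : (ι → ℝ) → ℝ} (hm : Measurable h) (s : ι → ℝ)
    (hh : ∀ η, |h η| ≤ ∑ j, s j * |η j|) :
    Integrable (fun η => exp (h η)) (Measure.pi fun _ => cPoisson c r) := by
  have := isProbabilityMeasure_cPoisson (r := r) hc
  refine (Integrable.fintype_prod fun j => integrable_exp_mul_abs_cPoisson hc hr (s j)).mono'
    hm.exp.aestronglyMeasurable (ae_of_all _ fun η => ?_)
  rw [Real.norm_eq_abs, abs_of_pos (exp_pos _), ← exp_sum]
  exact exp_le_exp.2 ((le_abs_self _).trans (hh η))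

end CompoundPoisson

lemma abs_le_mul_abs_of_abs_deriv_le {v : ℝ → ℝ} {b : ℝ} (hv : Differentiable ℝ v)
    (hv0 : v 0 = 0) (hv' : ∀ t, |deriv v t| ≤ b) (t : ℝ) : |v t| ≤ b * |t| := by
  simpa [hv0] using Convex.norm_image_sub_le_of_norm_deriv_le (fun x _ => hv x)
    (fun x _ => hv' x) convex_univ (Set.mem_univ 0) (Set.mem_univ t)

lemma monotone_add_mul_of_neg_le_deriv {v : ℝ → ℝ} {b : ℝ} (hv : Differentiable ℝ v)
    (hv' : ∀ t, -b ≤ deriv v t) : Monotone fun t => v t + b * t := by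
  refine monotone_of_deriv_nonneg (hv.add (differentiable_id.const_mul b)) fun t => ?_
  have hd : HasDerivAt (fun t => v t + b * t) (deriv v t + b * 1) t :=
    (hv t).hasDerivAt.add ((hasDerivAt_id' t).const_mul b)
  rw [hd.deriv, mul_one]
  linarith [hv' t]

section LatticeEnergy

variable {X ι : Type*} [Fintype ι] {u : ℝ → ℝ} {B : ℝ} {f : ι → X → ℝ} {g : X → ℝ}

lemma abs_comp_sum_mul_le (hu : ∀ t, |u t| ≤ B * |t|) (η : ι → ℝ) (x : X) :
    |u (∑ j, η j * f j x) * g x| ≤ B * ∑ j, |η j| * |f j x * g x| := by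
  have hB : 0 ≤ B := by simpa using (abs_nonneg _).trans (hu 1)
  calc |u (∑ j, η j * f j x) * g x| ≤ B * |∑ j, η j * f j x| * |g x| := by
        rw [abs_mul]; exact mul_le_mul_of_nonneg_right (hu _) (abs_nonneg _)
    _ ≤ B * (∑ j, |η j * f j x|) * |g x| := by
        gcongr; exact Finset.abs_sum_le_sum_abs _ _
    _ = B * ∑ j, |η j| * |f j x * g x| := by
        rw [mul_assoc, Finset.sum_mul]
        simp_rw [abs_mul, mul_assoc]

variable [MeasurableSpace X] {ν : Measure X}

noncomputable def latticeEnergy (ν : Measure X) (u : ℝ → ℝ) (f : ι → X → ℝ) (g : X → ℝ)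
    (η : ι → ℝ) : ℝ :=
  ∫ x, u (∑ j, η j * f j x) * g x ∂ν

lemma integrable_comp_sum_mul (hum : Measurable u) (hu : ∀ t, |u t| ≤ B * |t|)
    (hfm : ∀ j, Measurable (f j)) (hgm : Measurable g)
    (hfg : ∀ j, Integrable (fun x => f j x * g x) ν) (η : ι → ℝ) :
    Integrable (fun x => u (∑ j, η j * f j x) * g x) ν :=
  ((integrable_finsetSum _ fun j _ => ((hfg j).abs.const_mul |η j|)).const_mul B).mono'
    (by fun_prop) (ae_of_all _ fun x => abs_comp_sum_mul_le hu η x)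

lemma abs_latticeEnergy_le (hum : Measurable u) (hu : ∀ t, |u t| ≤ B * |t|)
    (hfm : ∀ j, Measurable (f j)) (hgm : Measurable g)
    (hfg : ∀ j, Integrable (fun x => f j x * g x) ν) (η : ι → ℝ) :
    |latticeEnergy ν u f g η| ≤ ∑ j, B * (∫ x, |f j x * g x| ∂ν) * |η j| := by
  have hint : ∀ j, Integrable (fun x => |η j| * |f j x * g x|) ν :=
    fun j => (hfg j).abs.const_mul _
  calc |latticeEnergy ν u f g η| ≤ ∫ x, B * ∑ j, |η j| * |f j x * g x| ∂ν :=
        abs_integral_le_integral_abs.trans (integral_mono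
          (integrable_comp_sum_mul hum hu hfm hgm hfg η).abs
          ((integrable_finsetSum _ fun j _ => hint j).const_mul B)
          fun x => abs_comp_sum_mul_le hu η x)
    _ = ∑ j, B * (∫ x, |f j x * g x| ∂ν) * |η j| := by
        rw [integral_const_mul, integral_finsetSum _ fun j _ => hint j, Finset.mul_sum]
        simp_rw [integral_const_mul]
        exact Finset.sum_congr rfl fun j _ => by ring

lemma measurable_latticeEnergy [SFinite ν] (hum : Measurable u) (hfm : ∀ j, Measurable (f j))
    (hgm : Measurable g) : Measurable (latticeEnergy ν u f g) :=
  (StronglyMeasurable.integral_prod_right'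
    (f := fun p : (ι → ℝ) × X => u (∑ j, p.1 j * f j p.2) * g p.2)
    (by fun_prop : Measurable _).stronglyMeasurable).measurable

lemma monotone_latticeEnergy (hu_mono : Monotone u) (hum : Measurable u)
    (hu : ∀ t, |u t| ≤ B * |t|) (hf0 : ∀ j x, 0 ≤ f j x) (hg0 : ∀ x, 0 ≤ g x)
    (hfm : ∀ j, Measurable (f j)) (hgm : Measurable g)
    (hfg : ∀ j, Integrable (fun x => f j x * g x) ν) : Monotone (latticeEnergy ν u f g) :=
  fun η η' hη => integral_mono (integrable_comp_sum_mul hum hu hfm hgm hfg η)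
    (integrable_comp_sum_mul hum hu hfm hgm hfg η') fun x =>
      mul_le_mul_of_nonneg_right (hu_mono (Finset.sum_le_sum fun j _ =>
        mul_le_mul_of_nonneg_right (hη j) (hf0 j x))) (hg0 x)

lemma latticeEnergy_add_mul_id (hum : Measurable u) (hu : ∀ t, |u t| ≤ B * |t|)
    (hfm : ∀ j, Measurable (f j)) (hgm : Measurable g)
    (hfg : ∀ j, Integrable (fun x => f j x * g x) ν) (b : ℝ) (η : ι → ℝ) :
    latticeEnergy ν (fun t => u t + b * t) f g η =
      latticeEnergy ν u f g η + b * ∑ j, η j * ∫ x, f j x * g x ∂ν := by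
  have hlin : Integrable (fun x => b * (∑ j, η j * f j x) * g x) ν := by
    simpa [mul_assoc] using integrable_comp_sum_mul (u := fun t => b * t) (B := |b|)
      (by fun_prop) (fun t => (abs_mul b t).le) hfm hgm hfg η
  simp only [latticeEnergy, add_mul]
  rw [integral_add (integrable_comp_sum_mul hum hu hfm hgm hfg η) hlin]
  congr 1
  simp_rw [mul_assoc, Finset.sum_mul, mul_assoc]
  rw [integral_const_mul, integral_finsetSum _ fun j _ => (hfg j).const_mul _]
  simp_rw [integral_const_mul]

lemma monotone_latticeEnergy_add_linear {v : ℝ → ℝ} {b : ℝ} (hv : Differentiable ℝ v)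
    (hv0 : v 0 = 0) (hv' : ∀ t, |deriv v t| ≤ b) (hf0 : ∀ j x, 0 ≤ f j x) (hg0 : ∀ x, 0 ≤ g x)
    (hfm : ∀ j, Measurable (f j)) (hgm : Measurable g)
    (hfg : ∀ j, Integrable (fun x => f j x * g x) ν) :
    Monotone fun η => latticeEnergy ν v f g η + b * ∑ j, η j * ∫ x, f j x * g x ∂ν := by
  have hvm : Measurable v := hv.continuous.measurable
  have hvb := abs_le_mul_abs_of_abs_deriv_le hv hv0 hv'
  have hmono := monotone_latticeEnergy (B := b + |b|) (ν := ν)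
    (monotone_add_mul_of_neg_le_deriv hv fun t => (abs_le.1 (hv' t)).1) (by fun_prop)
    (fun t => by
      rw [add_mul, ← abs_mul]
      exact (abs_add_le _ _).trans (add_le_add_left (hvb t) _))
    hf0 hg0 hfm hgm hfg
  intro η η' hη
  simpa only [latticeEnergy_add_mul_id hvm hvb hfm hgm hfg] using hmono hη

end LatticeEnergy

theorem lattice_gibbs_dominated_by_linear_general
    (d m : ℕ) (C : ℝ)
    (r : Measure ℝ) [IsProbabilityMeasure r] (hsupp : r (Set.Icc (-C) C)ᶜ = 0)
    (c : ℝ) (hc : 0 < c)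
    (v : ℝ → ℝ) (hv : ContDiff ℝ 2 v) (hv0 : v 0 = 0)
    (b : ℝ) (hv' : ∀ t, |deriv v t| ≤ b)
    (f : Fin m → (Fin d → ℝ) → ℝ) (hf0 : ∀ j x, 0 ≤ f j x)
    (hfc : ∀ j, Continuous (f j))
    (g : (Fin d → ℝ) → ℝ) (hg0 : ∀ x, 0 ≤ g x)
    (hgc : Continuous g) (hgs : HasCompactSupport g)
    (W : (Fin m → ℝ) → ℝ)
    (hW : ∀ η, W η = ∫ x, v (∑ j, η j * f j x) * g x)
    (a : Fin m → ℝ) (ha : ∀ j, a j = ∫ x, f j x * g x)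
    (Z : ℝ)
    (hZ : Z = ∫ η, Real.exp (-W η) ∂(Measure.pi fun _ : Fin m => cPoisson c r))
    (μ : Measure (Fin m → ℝ))
    (hμ : μ = (Measure.pi fun _ : Fin m => cPoisson c r).withDensity
      (fun η => ENNReal.ofReal (Real.exp (-W η) / Z)))
    (Zlin : ℝ)
    (hZlin : Zlin = ∫ η, Real.exp (b * ∑ j, η j * a j)
      ∂(Measure.pi fun _ : Fin m => cPoisson c r))
    (μlin : Measure (Fin m → ℝ))
    (hμlin : μlin = (Measure.pi fun _ : Fin m => cPoisson c r).withDensity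
      (fun η => ENNReal.ofReal (Real.exp (b * ∑ j, η j * a j) / Zlin))) :
    ∀ F : (Fin m → ℝ) → ℝ, Measurable F → (∃ M, ∀ η, |F η| ≤ M) → Monotone F →
      ∫ η, F η ∂μ ≤ ∫ η, F η ∂μlin := by
  intro F hFm hFb hF
  have := isProbabilityMeasure_cPoisson (r := r) hc.le
  have hr : ∀ᵐ t ∂r, |t| ≤ C :=
    Filter.Eventually.mono (p := (· ∈ Set.Icc (-C) C)) (mem_ae_iff.2 hsupp) fun t => abs_le.2
  have hvd : Differentiable ℝ v := hv.differentiable (by norm_num)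
  have hfm : ∀ j, Measurable (f j) := fun j => (hfc j).measurable
  have hfg : ∀ j, Integrable (fun x => f j x * g x) :=
    fun j => ((hfc j).mul hgc).integrable_of_hasCompactSupport hgs.mul_left
  have hWe : W = latticeEnergy volume v f g := funext hW
  have hWm : Measurable W :=
    hWe ▸ measurable_latticeEnergy hvd.continuous.measurable hfm hgc.measurable
  have hL : ∀ η : Fin m → ℝ, b * ∑ j, η j * a j = ∑ j, b * a j * η j := fun η => by
    simp only [Finset.mul_sum, mul_comm, mul_left_comm]
  have hμ' : μ = (Measure.pi fun _ => cPoisson c r).tilted fun η => -W η := by rw [hμ, hZ]; rfl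
  have hμlin' : μlin = (Measure.pi fun _ => cPoisson c r).tilted fun η => ∑ j, b * a j * η j := by
    rw [hμlin, hZlin]; simp_rw [hL]; rfl
  rw [hμ', hμlin']
  refine Measure.integral_tilted_neg_le_integral_tilted_linear _ _
    (fun j => integrable_exp_mul_cPoisson hc.le hr _) hWm ?_ ?_ hFm hFb hF
  · exact integrable_exp_pi_cPoisson (h := fun η => -W η) hc.le hr hWm.neg _ fun η => by
      rw [abs_neg, hWe]
      exact abs_latticeEnergy_le hvd.continuous.measurable
        (abs_le_mul_abs_of_abs_deriv_le hvd hv0 hv') hfm hgc.measurable hfg η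
  · simpa only [hWe, ← ha, hL] using
      monotone_latticeEnergy_add_linear hvd hv0 hv' hf0 hg0 hfm hgc.measurable hfg

/-- finite lattice analog of the first inequality of
Proposition 4.2: the interacting lattice Gibbs measure `μ = Z⁻¹ e^{-W} ρ^{⊗m}`
is dominated, on bounded measurable coordinatewise increasing observables, by the
lattice measure `μ_lin` with linear energy density `-bφ`, i.e. with density
proportional to `exp (b ∑_j η_j a_j)`, `a_j = ∫ f_j g dx`. -/
theorem lattice_gibbs_dominated_by_linear
    (d m : ℕ) (hm : 1 ≤ m) (C : ℝ) (hC : 0 < C)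
    (r : Measure ℝ) [IsProbabilityMeasure r] (hsupp : r (Set.Icc (-C) C)ᶜ = 0)
    (c : ℝ) (hc : 0 < c)
    (v : ℝ → ℝ) (hv : ContDiff ℝ 2 v) (hv0 : v 0 = 0)
    (b : ℝ) (hb : 0 < b) (hv' : ∀ t, |deriv v t| ≤ b)
    (hv'' : ∀ t, deriv (deriv v) t ≤ 0)
    (f : Fin m → (Fin d → ℝ) → ℝ) (hf0 : ∀ j x, 0 ≤ f j x)
    (hfc : ∀ j, Continuous (f j)) (hfs : ∀ j, HasCompactSupport (f j))
    (g : (Fin d → ℝ) → ℝ) (hg0 : ∀ x, 0 ≤ g x)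
    (hgc : Continuous g) (hgs : HasCompactSupport g)
    (W : (Fin m → ℝ) → ℝ)
    (hW : ∀ η, W η = ∫ x, v (∑ j, η j * f j x) * g x)
    (a : Fin m → ℝ) (ha : ∀ j, a j = ∫ x, f j x * g x)
    (Z : ℝ)
    (hZ : Z = ∫ η, Real.exp (-W η) ∂(Measure.pi fun _ : Fin m => cPoisson c r))
    (μ : Measure (Fin m → ℝ))
    (hμ : μ = (Measure.pi fun _ : Fin m => cPoisson c r).withDensity
      (fun η => ENNReal.ofReal (Real.exp (-W η) / Z)))
    (Zlin : ℝ)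
    (hZlin : Zlin = ∫ η, Real.exp (b * ∑ j, η j * a j)
      ∂(Measure.pi fun _ : Fin m => cPoisson c r))
    (μlin : Measure (Fin m → ℝ))
    (hμlin : μlin = (Measure.pi fun _ : Fin m => cPoisson c r).withDensity
      (fun η => ENNReal.ofReal (Real.exp (b * ∑ j, η j * a j) / Zlin))) :
    ∀ F : (Fin m → ℝ) → ℝ, Measurable F → (∃ M, ∀ η, |F η| ≤ M) → Monotone F →
      ∫ η, F η ∂μ ≤ ∫ η, F η ∂μlin :=
  lattice_gibbs_dominated_by_linear_general d m C r hsupp c hc v hv hv0 b hv' f hf0 hfc g hg0 hgc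
    hgs W hW a ha Z hZ μ hμ Zlin hZlin μlin hμlin
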